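/- arXiv:cond-mat/0506525 — 4 statements merged into one kernel-verified Lean document; each statement's English description precedes it below -/
import Mathlib

section
/- Consistency of the Bethe ansatz amplitudes (Yang–Baxter/braid relation): define for complex numbers $z,w$ with $1-v_kz\neq0$, $1-v_kw\neq0$ the scattering factor $s_k(z,w)=-\frac{1-v_k w}{1-v_k z}$. Then the amplitudes $S_\pi$ defined by $S_{T_k\pi}=s_k(z_{\pi(k)},z_{\pi(k+1)})S_\pi$ are well defined, i.e. for any two reduced words for the same permutation the product of scattering factors agrees; in particular the braid relation holds: applying the sequence of exchanges $T_k T_{k+1} T_k$ to any $\pi$ yields the same amplitude as applying $T_{k+1} T_k T_{k+1}$. -/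
open Finset

/-- The scattering factor `s_k(z,w) = -(1 - v_k w)/(1 - v_k z)`. -/
noncomputable def scat (v : ℕ → ℝ) (k : ℕ) (zz ww : ℂ) : ℂ :=
  -((1 - (v k : ℂ) * ww) / (1 - (v k : ℂ) * zz))

/-! The amplitudes have the closed form `S_π = S_id · F(π) / F(id)`, where
`F(π) = sign π · ∏_p ∏_{p < k < N} (1 - v_k z_{π(p)+1})`: exchanging the values at positions
`q, q+1` flips the sign and trades the factor `1 - v_{q+1} z_{π(q)+1}` for
`1 - v_{q+1} z_{π(q+1)+1}`, which is exactly multiplication by the scattering factor.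
Uniqueness holds because adjacent transpositions generate the symmetric group, and the braid
relation reduces to a rational identity between scattering factors. -/

open Equiv

theorem scat_braid (v : ℕ → ℝ) (q : ℕ) {x y w : ℂ}
    (h1x : 1 - (v (q + 1) : ℂ) * x ≠ 0) (h2x : 1 - (v (q + 2) : ℂ) * x ≠ 0)
    (h1y : 1 - (v (q + 1) : ℂ) * y ≠ 0) (h2y : 1 - (v (q + 2) : ℂ) * y ≠ 0) :
    scat v (q + 1) x y * scat v (q + 2) x w * scat v (q + 1) y w =
      scat v (q + 2) y w * scat v (q + 1) x w * scat v (q + 2) x y := by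
  unfold scat
  simp only [neg_mul, mul_neg, neg_neg, div_mul_div_comm, neg_inj]
  rw [div_eq_div_iff (by simp [*]) (by simp [*])]
  ring

theorem Equiv.swap_braid {α : Type*} [DecidableEq α] {a b c : α}
    (hab : a ≠ b) (hbc : b ≠ c) (hac : a ≠ c) :
    swap a b * swap b c * swap a b = swap b c * swap a b * swap b c := by
  rw [swap_mul_swap_mul_swap hab hac, swap_comm a b, swap_comm b c,
    swap_mul_swap_mul_swap hbc.symm hac.symm, swap_comm]

theorem Equiv.Perm.funext_of_mul_adjacent_swap {α : Type*} {n : ℕ} {f g : Perm (Fin n) → α}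
    (h1 : f 1 = g 1)
    (hstep : ∀ π (q : ℕ) (hq : q + 1 < n), f π = g π →
      f (π * swap ⟨q, Nat.lt_of_succ_lt hq⟩ ⟨q + 1, hq⟩) =
        g (π * swap ⟨q, Nat.lt_of_succ_lt hq⟩ ⟨q + 1, hq⟩)) :
    f = g := by
  funext π
  cases n with
  | zero => rwa [Subsingleton.elim π 1]
  | succ n =>
    have hπ : π ∈ Submonoid.closure (Set.range fun i : Fin n => swap i.castSucc i.succ) := by
      rw [mclosure_swap_castSucc_succ]; trivial
    induction hπ using Submonoid.closure_induction_right with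
    | one => exact h1
    | mul_right σ _ _ hswap ih =>
      obtain ⟨i, rfl⟩ := hswap
      exact hstep σ i (by omega) ih

theorem Fintype.prod_apply_swap_mul {ι κ M : Type*} [Fintype ι] [DecidableEq ι] [CommMonoid M]
    (f : ι → κ → M) (σ : ι → κ) {a b : ι} (hab : a ≠ b) :
    (∏ p, f p (σ (swap a b p))) * (f a (σ a) * f b (σ b)) =
      (∏ p, f p (σ p)) * (f a (σ b) * f b (σ a)) := by
  have hfix : ∀ p ∈ ({a, b} : Finset ι)ᶜ, f p (σ (swap a b p)) = f p (σ p) := by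
    intro p hp
    simp only [mem_compl, mem_insert, mem_singleton, not_or] at hp
    rw [swap_apply_of_ne_of_ne hp.1 hp.2]
  rw [← prod_compl_mul_prod {a, b}, ← prod_compl_mul_prod {a, b} (fun p => f p (σ p)),
    prod_pair hab, prod_pair hab, Finset.prod_congr rfl hfix, swap_apply_left, swap_apply_right]
  exact mul_right_comm _ _ _

noncomputable def betheFactor (v : ℕ → ℝ) (z : ℕ → ℂ) (N p m : ℕ) : ℂ :=
  ∏ k ∈ Ico (p + 1) N, (1 - (v k : ℂ) * z (m + 1))

noncomputable def betheAmplitude (v : ℕ → ℝ) (z : ℕ → ℂ) (N : ℕ) (π : Perm (Fin N)) : ℂ :=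
  ((Perm.sign π : ℤ) : ℂ) * ∏ p : Fin N, betheFactor v z N p (π p)

section

variable {v : ℕ → ℝ} {z : ℕ → ℂ}

theorem betheFactor_ne_zero (hz : ∀ j m, 1 - (v j : ℂ) * z m ≠ 0) (N p m : ℕ) :
    betheFactor v z N p m ≠ 0 :=
  prod_ne_zero_iff.2 fun k _ => hz k (m + 1)

theorem betheFactor_eq_mul_succ {N q : ℕ} (hq : q + 1 < N) (m : ℕ) :
    betheFactor v z N q m = (1 - (v (q + 1) : ℂ) * z (m + 1)) * betheFactor v z N (q + 1) m :=
  prod_eq_prod_Ico_succ_bot hq _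

theorem betheAmplitude_ne_zero (hz : ∀ j m, 1 - (v j : ℂ) * z m ≠ 0) {N : ℕ}
    (π : Perm (Fin N)) : betheAmplitude v z N π ≠ 0 :=
  mul_ne_zero (by simp) (prod_ne_zero_iff.2 fun p _ => betheFactor_ne_zero hz N p (π p))

theorem betheAmplitude_mul_swap (hz : ∀ j m, 1 - (v j : ℂ) * z m ≠ 0) {N : ℕ}
    (π : Perm (Fin N)) (q : ℕ) (hq : q + 1 < N) :
    betheAmplitude v z N (π * swap ⟨q, Nat.lt_of_succ_lt hq⟩ ⟨q + 1, hq⟩) =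
      scat v (q + 1) (z ((π ⟨q, Nat.lt_of_succ_lt hq⟩ : ℕ) + 1))
        (z ((π ⟨q + 1, hq⟩ : ℕ) + 1)) * betheAmplitude v z N π := by
  set a : Fin N := ⟨q, Nat.lt_of_succ_lt hq⟩
  set b : Fin N := ⟨q + 1, hq⟩
  have hab : a ≠ b := by simp [a, b, Fin.ext_iff]
  have hprod :=
    Fintype.prod_apply_swap_mul (fun p : Fin N => betheFactor v z N p) (fun p => (π p : ℕ)) hab
  simp only [show (a : ℕ) = q from rfl, show (b : ℕ) = q + 1 from rfl,
    betheFactor_eq_mul_succ hq] at hprod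
  have hsign : ((Perm.sign (π * swap a b) : ℤ) : ℂ) = -((Perm.sign π : ℤ) : ℂ) := by
    simp [Perm.sign_mul, Perm.sign_swap hab]
  have hcancel : (∏ p : Fin N, betheFactor v z N p (π (swap a b p))) *
      (1 - (v (q + 1) : ℂ) * z ((π a : ℕ) + 1)) =
      (∏ p : Fin N, betheFactor v z N p (π p)) * (1 - (v (q + 1) : ℂ) * z ((π b : ℕ) + 1)) := by
    refine mul_right_cancel₀ (mul_ne_zero (betheFactor_ne_zero hz N (q + 1) (π a))
      (betheFactor_ne_zero hz N (q + 1) (π b))) ?_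
    linear_combination hprod
  have := hz (q + 1) ((π a : ℕ) + 1)
  unfold betheAmplitude scat
  rw [hsign]
  field_simp
  simp only [Perm.mul_apply]
  linear_combination -hcancel

end

/-- Well-definedness of the Bethe ansatz amplitudes: there is a unique family `S_π`
extending a given `S_id` via the exchange relation (so the value is independent of the
chosen reduced word); in particular the braid relation holds: applying `T_q T_{q+1} T_q`
to any `π` yields the same amplitude (the same permutation and the same product of
scattering factors) as applying `T_{q+1} T_q T_{q+1}`.  Positions are 0-based, and
rates/momenta with 1-based paper index `j` are `v j`, `z j`. -/
theorem bethe_well_defined (N : ℕ) (v : ℕ → ℝ)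
    (z : ℕ → ℂ) (hz : ∀ j m, 1 - (v j : ℂ) * z m ≠ 0) (S₀ : ℂ) :
    (∃! S : Equiv.Perm (Fin N) → ℂ, S 1 = S₀ ∧
      ∀ (π : Equiv.Perm (Fin N)) (q : ℕ) (hq : q + 1 < N),
        S (π * Equiv.swap ⟨q, Nat.lt_of_succ_lt hq⟩ ⟨q + 1, hq⟩) =
          scat v (q + 1) (z ((π ⟨q, Nat.lt_of_succ_lt hq⟩ : ℕ) + 1))
            (z ((π ⟨q + 1, hq⟩ : ℕ) + 1)) * S π) ∧
    (∀ (π : Equiv.Perm (Fin N)) (q : ℕ) (hq : q + 2 < N),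
      letI a : Fin N := ⟨q, by omega⟩
      letI b : Fin N := ⟨q + 1, by omega⟩
      letI c : Fin N := ⟨q + 2, hq⟩
      letI π₁ := π * Equiv.swap a b
      letI π₂ := π₁ * Equiv.swap b c
      letI π₁' := π * Equiv.swap b c
      letI π₂' := π₁' * Equiv.swap a b
      π₂ * Equiv.swap a b = π₂' * Equiv.swap b c ∧
      scat v (q + 1) (z ((π a : ℕ) + 1)) (z ((π b : ℕ) + 1)) *
        scat v (q + 2) (z ((π₁ b : ℕ) + 1)) (z ((π₁ c : ℕ) + 1)) *
        scat v (q + 1) (z ((π₂ a : ℕ) + 1)) (z ((π₂ b : ℕ) + 1)) =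
      scat v (q + 2) (z ((π b : ℕ) + 1)) (z ((π c : ℕ) + 1)) *
        scat v (q + 1) (z ((π₁' a : ℕ) + 1)) (z ((π₁' b : ℕ) + 1)) *
        scat v (q + 2) (z ((π₂' b : ℕ) + 1)) (z ((π₂' c : ℕ) + 1))) := by
  have hF1 := betheAmplitude_ne_zero hz (1 : Perm (Fin N))
  refine ⟨⟨fun π => S₀ * (betheAmplitude v z N π / betheAmplitude v z N 1), ⟨?_, ?_⟩, ?_⟩, ?_⟩
  · simp only [div_self hF1, mul_one]
  · intro π q hq
    simp only [betheAmplitude_mul_swap hz π q hq]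
    ring
  · rintro S ⟨hS1, hS⟩
    refine Perm.funext_of_mul_adjacent_swap ?_ fun π q hq h => ?_
    · simp only [hS1, div_self hF1, mul_one]
    · rw [hS, h, betheAmplitude_mul_swap hz π q hq]
      ring
  · intro π q hq
    set a : Fin N := ⟨q, by omega⟩
    set b : Fin N := ⟨q + 1, by omega⟩
    set c : Fin N := ⟨q + 2, hq⟩
    have hab : a ≠ b := by simp [a, b, Fin.ext_iff]
    have hbc : b ≠ c := by simp [b, c, Fin.ext_iff]
    have hac : a ≠ c := by simp [a, c, Fin.ext_iff]
    refine ⟨by simpa only [mul_assoc] using congrArg (π * ·) (swap_braid hab hbc hac), ?_⟩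
    simp only [Perm.mul_apply, swap_apply_left, swap_apply_right,
      swap_apply_of_ne_of_ne hab hac, swap_apply_of_ne_of_ne hac.symm hbc.symm]
    exact scat_braid v q (hz _ _) (hz _ _) (hz _ _) (hz _ _)
end

section
/- The Bethe determinant eigenfunction satisfies the boundary condition encoding the exclusion interaction with particle-dependent rates: with $P_{\mathbf{k}}(x_1,\dots,x_N)=\prod_i v_i^{x_i}\det\big[\prod_{j<n}(1-v_jz_m)^{-1}\prod_{j<m}(1-v_jz_m)\,z_m^{x_n}\big]_{m,n}$, for every $1\le \kappa\le N-1$ and all integer arguments, $v_{\kappa+1}\,P_{\mathbf{k}}(\dots,x_\kappa,x_\kappa,\dots)=v_\kappa\,P_{\mathbf{k}}(\dots,x_\kappa,x_\kappa+1,\dots)$, where the two displayed arguments are in positions $\kappa$ and $\kappa+1$. -/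
open Finset

/-- The Bethe determinant eigenfunction
`P_k(x) = ∏ v_i^{x_i} · det[ ∏_{j<n}(1-v_j z_m)⁻¹ ∏_{j<m}(1-v_j z_m) z_m^{x_n} ]`,
written 0-based in `m,n`; rates/momenta with 1-based paper index `j` are `v j`, `z j`. -/
noncomputable def Pk (N : ℕ) (v : ℕ → ℝ) (z : ℕ → ℂ) (x : Fin N → ℤ) : ℂ :=
  (∏ i : Fin N, ((v ((i : ℕ) + 1) : ℂ)) ^ x i) *
    Matrix.det (Matrix.of fun m n : Fin N =>
      (∏ j ∈ range (n : ℕ), (1 - (v (j + 1) : ℂ) * z ((m : ℕ) + 1))⁻¹) *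
      (∏ j ∈ range (m : ℕ), (1 - (v (j + 1) : ℂ) * z ((m : ℕ) + 1))) *
      z ((m : ℕ) + 1) ^ x n)

/-!
Let `E n y` be the column of the Bethe matrix of particle `n` at position `y` (entries
`betheEntry v z m n y`). Passing from particle `n` to `n + 1` multiplies row `m` by
`(1 - v_{n+1} z_m)⁻¹ = v_{n+1} z_m (1 - v_{n+1} z_m)⁻¹ + 1`, so
`E (n+1) y = v_{n+1} E (n+1) (y+1) + E n y`. If `x_κ = x_{κ+1}`, the last summand is column `κ`
itself and drops out of the determinant, which therefore picks up the factor `v_κ` when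
`x_{κ+1}` is raised by one, while the prefactor `∏ v_i^{x_i}` picks up `v_{κ+1}`.
-/

theorem Finset.prod_zpow_update_add_one {ι G : Type*} [Fintype ι] [DecidableEq ι]
    [CommGroupWithZero G] (f : ι → G) (x : ι → ℤ) {k : ι} (hk : f k ≠ 0) :
    ∏ i, f i ^ Function.update x k (x k + 1) i = f k * ∏ i, f i ^ x i := by
  have hupd : (fun i => f i ^ Function.update x k (x k + 1) i) =
      Function.update (fun i => f i ^ x i) k (f k ^ (x k + 1)) :=
    funext (Function.apply_update (fun i e => f i ^ e) x k _)
  rw [hupd, prod_update_of_mem (mem_univ k), zpow_add_one₀ hk, sdiff_singleton_eq_erase,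
    ← mul_prod_erase univ (fun i => f i ^ x i) (mem_univ k)]
  ac_rfl

theorem Matrix.det_updateCol_smul_add_col {n R : Type*} [Fintype n] [DecidableEq n] [CommRing R]
    (M : Matrix n n R) {j p : n} (hpj : p ≠ j) (c : R) (u : n → R) :
    (M.updateCol j (c • u + fun i => M i p)).det = c * (M.updateCol j u).det := by
  set B := M.updateCol j (c • u)
  have hB : M.updateCol j (c • u + fun i => M i p) = B.updateCol j fun i => B i j + B i p := by
    ext i l
    by_cases hl : l = j
    · simp [B, hl, hpj]
    · simp [B, hl]
  rw [hB, det_updateCol_add_self B hpj.symm, det_updateCol_smul]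

noncomputable def betheEntry (v : ℕ → ℝ) (z : ℕ → ℂ) (m n : ℕ) (y : ℤ) : ℂ :=
  (∏ j ∈ range n, (1 - (v (j + 1) : ℂ) * z (m + 1))⁻¹) *
    (∏ j ∈ range m, (1 - (v (j + 1) : ℂ) * z (m + 1))) * z (m + 1) ^ y

theorem betheEntry_succ (v : ℕ → ℝ) (z : ℕ → ℂ) (m n : ℕ) (y : ℤ) (hz0 : z (m + 1) ≠ 0)
    (hz : 1 - (v (n + 1) : ℂ) * z (m + 1) ≠ 0) :
    betheEntry v z m (n + 1) y = v (n + 1) * betheEntry v z m (n + 1) (y + 1) +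
      betheEntry v z m n y := by
  have hinv : (1 - (v (n + 1) : ℂ) * z (m + 1))⁻¹ =
      v (n + 1) * z (m + 1) * (1 - (v (n + 1) : ℂ) * z (m + 1))⁻¹ + 1 := by
    field_simp
    ring
  simp only [betheEntry, prod_range_succ, zpow_add_one₀ hz0]
  linear_combination ((∏ j ∈ range n, (1 - (v (j + 1) : ℂ) * z (m + 1))⁻¹) *
    (∏ j ∈ range m, (1 - (v (j + 1) : ℂ) * z (m + 1))) * z (m + 1) ^ y) * hinv

noncomputable def betheMatrix (N : ℕ) (v : ℕ → ℝ) (z : ℕ → ℂ) (x : Fin N → ℤ) :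
    Matrix (Fin N) (Fin N) ℂ :=
  Matrix.of fun m n => betheEntry v z m n (x n)

theorem Pk_eq_mul_det_betheMatrix (N : ℕ) (v : ℕ → ℝ) (z : ℕ → ℂ) (x : Fin N → ℤ) :
    Pk N v z x = (∏ i : Fin N, (v (i + 1) : ℂ) ^ x i) * (betheMatrix N v z x).det :=
  rfl

theorem det_betheMatrix_update_add_one {N : ℕ} (v : ℕ → ℝ) (z : ℕ → ℂ) (hz0 : ∀ m, z m ≠ 0)
    (hz : ∀ j m, 1 - (v j : ℂ) * z m ≠ 0) {p k : Fin N} (hpk : (k : ℕ) = p + 1)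
    (x : Fin N → ℤ) (hx : x k = x p) :
    (betheMatrix N v z x).det =
      v k * (betheMatrix N v z (Function.update x k (x k + 1))).det := by
  have hpk' : p ≠ k := by
    rintro rfl
    omega
  set M' := betheMatrix N v z (Function.update x k (x k + 1))
  have hcol : betheMatrix N v z x =
      M'.updateCol k ((v k : ℂ) • (fun m => M' m k) + fun m => M' m p) := by
    ext m n
    by_cases hn : n = k
    · subst hn
      simp only [M', betheMatrix, Matrix.updateCol_self, Matrix.of_apply, Pi.add_apply,
        Pi.smul_apply, smul_eq_mul, Function.update_self, Function.update_of_ne hpk', hpk]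
      rw [hx, betheEntry_succ v z m p (x p) (hz0 _) (hz _ _)]
    · simp [M', betheMatrix, hn]
  rw [hcol, Matrix.det_updateCol_smul_add_col M' hpk', Matrix.updateCol_eq_self]

theorem bethe_boundary_condition (N : ℕ) (v : ℕ → ℝ) (hv : ∀ i, 0 < v i)
    (z : ℕ → ℂ) (hz0 : ∀ m, z m ≠ 0) (hz : ∀ j m, 1 - (v j : ℂ) * z m ≠ 0)
    (q : ℕ) (hq : q + 1 < N) (x : Fin N → ℤ)
    (hx : x ⟨q + 1, hq⟩ = x ⟨q, Nat.lt_of_succ_lt hq⟩) :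
    (v (q + 2) : ℂ) * Pk N v z x =
      (v (q + 1) : ℂ) *
        Pk N v z (Function.update x ⟨q + 1, hq⟩ (x ⟨q, Nat.lt_of_succ_lt hq⟩ + 1)) := by
  have hv' : (v (q + 2) : ℂ) ≠ 0 := by exact_mod_cast (hv (q + 2)).ne'
  rw [← hx, Pk_eq_mul_det_betheMatrix, Pk_eq_mul_det_betheMatrix, det_betheMatrix_update_add_one v z hz0 hz rfl x hx,
    Finset.prod_zpow_update_add_one (fun i : Fin N => (v (i + 1) : ℂ)) x hv']
  ring
end

section
/- The determinant solution satisfies the boundary condition: with $P(\mathbf{x}|\mathbf{y};t)=\prod_{i=1}^N e^{-tv_i}v_i^{x_i-y_i}\det[F_{m,n}(x_n-y_m,t)]_{m,n}$, for every $1\le \kappa\le N-1$, $v_{\kappa+1}P(\dots,x_\kappa,x_\kappa,\dots|\mathbf{y};t)=v_\kappa P(\dots,x_\kappa,x_\kappa+1,\dots|\mathbf{y};t)$, where the displayed arguments are the $\kappa$-th and $(\kappa+1)$-st coordinates of $\mathbf{x}$. -/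
open Finset

/-- The contour-integral function `F_{k,l}(x,t)` of Rákos–Schütz:
`F_{k,l}(x,t) = (2πi)⁻¹ ∮ e^{t/z} z^{x-1} ∏_{i=1}^{l-1}(1 - v_i z)⁻¹ ∏_{i=1}^{k-1}(1 - v_i z) dz`
along a circle of radius `ε` around the origin.  The rates are `v 1, v 2, …`. -/
noncomputable def F (v : ℕ → ℝ) (ε : ℝ) (k l : ℕ) (x : ℤ) (t : ℝ) : ℂ :=
  (2 * Real.pi * Complex.I)⁻¹ *
    (∮ z in C(0, ε), Complex.exp ((t : ℂ) / z) * z ^ (x - 1) *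
      (∏ i ∈ range (l - 1), (1 - (v (i + 1) : ℂ) * z)⁻¹) *
      ∏ i ∈ range (k - 1), (1 - (v (i + 1) : ℂ) * z))

/-- The determinant formula for the conditional probability:
`P(x|y;t) = ∏_i e^{-t v_i} v_i^{x_i - y_i} · det[F_{m,n}(x_n - y_m, t)]`,
written 0-based in `m,n` (particle `i` (0-based) has rate `v (i+1)`). -/
noncomputable def Pc (N : ℕ) (v : ℕ → ℝ) (ε : ℝ) (y x : Fin N → ℤ) (t : ℝ) : ℂ :=
  (∏ i : Fin N,
      Complex.exp (-(t * v ((i : ℕ) + 1) : ℝ)) * (v ((i : ℕ) + 1) : ℂ) ^ (x i - y i)) *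
    Matrix.det (Matrix.of fun m n : Fin N =>
      F v ε ((m : ℕ) + 1) ((n : ℕ) + 1) (x n - y m) t)

/-! Since `(1 - v_l z)⁻¹ (1 - v_l z) = 1` under the integral,
`F_{k,l}(x) = F_{k,l+1}(x) - v_l F_{k,l+1}(x + 1)`. When `x_κ = x_{κ+1}`, this writes column `κ`
of the matrix as `C - v_κ D`, where `C` is column `κ + 1` and `D` is column `κ + 1` after raising
`x_{κ+1}` by one. Subtracting and adding multiples of column `κ + 1` and swapping the two columns
gives `det = v_κ · det'`, while raising `x_{κ+1}` multiplies the prefactor by `v_{κ+1}`. -/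

open Metric

theorem one_sub_mul_ne_zero_of_mem_sphere {a : ℝ} {ε : ℝ} (h : |a| * ε < 1) {z : ℂ}
    (hz : z ∈ sphere (0 : ℂ) ε) : 1 - (a : ℂ) * z ≠ 0 := by
  rw [sub_ne_zero, ne_comm]
  refine ne_of_apply_ne norm (ne_of_lt ?_)
  simpa [mem_sphere_zero_iff_norm.1 hz] using h

namespace F

variable (v : ℕ → ℝ) (k l : ℕ) (x : ℤ) (t : ℝ)

noncomputable def integrand (z : ℂ) : ℂ :=
  Complex.exp ((t : ℂ) / z) * z ^ (x - 1) *
    (∏ i ∈ range (l - 1), (1 - (v (i + 1) : ℂ) * z)⁻¹) *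
    ∏ i ∈ range (k - 1), (1 - (v (i + 1) : ℂ) * z)

theorem eq_mul_circleIntegral_integrand (ε : ℝ) :
    F v ε k l x t = (2 * Real.pi * Complex.I)⁻¹ * ∮ z in C(0, ε), integrand v k l x t z :=
  rfl

variable {v} {ε : ℝ}

theorem continuousOn_integrand (hε : 0 < ε) (hvε : ∀ j, |v j| * ε < 1) :
    ContinuousOn (integrand v k l x t) (sphere 0 ε) := by
  have hz0 : ∀ z ∈ sphere (0 : ℂ) ε, z ≠ 0 := fun z hz =>
    ne_zero_of_mem_sphere hε.ne' ⟨z, hz⟩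
  refine ((((continuousOn_const.div continuousOn_id hz0).cexp).mul
    (continuousOn_id.zpow₀ _ fun z hz => Or.inl (hz0 z hz))).mul
    (continuousOn_finsetProd _ fun i _ => ?_)).mul (by fun_prop)
  exact (continuousOn_const.sub (continuousOn_const.mul continuousOn_id)).inv₀
    fun z hz => one_sub_mul_ne_zero_of_mem_sphere (hvε _) hz

theorem integrand_eq_sub_integrand_succ (hl : 1 ≤ l) {z : ℂ} (hz : z ≠ 0)
    (hvz : 1 - (v l : ℂ) * z ≠ 0) :
    integrand v k l x t z =
      integrand v k (l + 1) x t z - v l * integrand v k (l + 1) (x + 1) t z := by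
  obtain ⟨l, rfl⟩ := Nat.exists_eq_add_of_le' hl
  have hzpow : z ^ (x + 1 - 1) = z ^ (x - 1) * z := by
    rw [add_sub_cancel_right, ← zpow_add_one₀ hz, sub_add_cancel]
  simp only [integrand, Nat.add_sub_cancel, prod_range_succ, hzpow]
  set w := 1 - (v (l + 1) : ℂ) * z with hw
  field_simp
  rw [hw]
  ring

theorem eq_sub_mul_succ (hε : 0 < ε) (hvε : ∀ j, |v j| * ε < 1) (hl : 1 ≤ l) :
    F v ε k l x t = F v ε k (l + 1) x t - v l * F v ε k (l + 1) (x + 1) t := by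
  have hcont : ∀ x', ContinuousOn (integrand v k (l + 1) x' t) (sphere 0 ε) := fun x' =>
    continuousOn_integrand k (l + 1) x' t hε hvε
  simp only [eq_mul_circleIntegral_integrand]
  rw [mul_left_comm, ← mul_sub, ← circleIntegral.integral_const_mul (v l : ℂ),
    ← circleIntegral.integral_sub ((hcont x).circleIntegrable hε.le)
      (ContinuousOn.circleIntegrable (f := fun z => v l * integrand v k (l + 1) (x + 1) t z)
        hε.le (continuousOn_const.mul (hcont (x + 1))))]
  refine congrArg _ (circleIntegral.integral_congr hε.le fun z hz => ?_)
  exact integrand_eq_sub_integrand_succ k l x t hl (ne_zero_of_mem_sphere hε.ne' ⟨z, hz⟩)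
    (one_sub_mul_ne_zero_of_mem_sphere (hvε l) hz)

end F

namespace Matrix

variable {n R : Type*} [Fintype n] [DecidableEq n] [CommRing R]

theorem det_eq_mul_det_updateCol_of_col_eq (A : Matrix n n R) {i j : n} (hij : i ≠ j)
    (C D : n → R) (a : R) (hi : ∀ k, A k i = C k - a * D k) (hj : ∀ k, A k j = C k) :
    A.det = a * (A.updateCol j D).det := by
  have hsubj : A.det = (A.updateCol i (-a • D)).det := by
    rw [← det_updateCol_add_smul_self A hij (-1)]
    congr 2
    ext k
    simp only [hi, hj, Pi.smul_apply, smul_eq_mul]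
    ring
  have hswap :
      A.updateCol i D = ((A.updateCol j D).updateCol i C).submatrix id (Equiv.swap i j) := by
    ext k l
    rcases eq_or_ne l i with rfl | hli
    · simp [hij.symm]
    rcases eq_or_ne l j with rfl | hlj
    · simp [hli, hj]
    · simp [Equiv.swap_apply_of_ne_of_ne hli hlj, hli, hlj]
  have haddj : (A.updateCol j D).det = ((A.updateCol j D).updateCol i C).det := by
    rw [← det_updateCol_add_smul_self (A.updateCol j D) hij a]
    congr 2
    ext k
    simp [hi, hij]
  rw [hsubj, det_updateCol_smul, hswap, det_permute', Equiv.Perm.sign_swap hij, haddj]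
  simp

end Matrix

theorem Matrix.of_update_eq_updateCol {m n α β : Type*} [DecidableEq n]
    (f : m → n → α → β) (x : n → α) (j : n) (b : α) :
    Matrix.of (fun r c => f r c (Function.update x j b c)) =
      (Matrix.of fun r c => f r c (x c)).updateCol j (fun r => f r j b) := by
  ext r c
  rcases eq_or_ne c j with rfl | hc
  · simp
  · simp [hc]

theorem prod_mul_zpow_update_add_one {ι G : Type*} [Fintype ι] [DecidableEq ι]
    [CommGroupWithZero G]
    (c w : ι → G) (x y : ι → ℤ) (j : ι) (hw : w j ≠ 0) :
    ∏ i, c i * w i ^ (Function.update x j (x j + 1) i - y i) =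
      w j * ∏ i, c i * w i ^ (x i - y i) := by
  rw [Fintype.prod_eq_mul_prod_compl j, Fintype.prod_eq_mul_prod_compl j (fun i => c i * _)]
  rw [Function.update_self, add_sub_right_comm, zpow_add_one₀ hw]
  rw [Finset.prod_congr rfl fun i hi => by rw [Function.update_of_ne (by simpa using hi)]]
  ac_rfl

theorem determinant_boundary_condition_general
    (N : ℕ) (v : ℕ → ℝ) (vmax : ℝ) (hv : ∀ i, 0 < v i) (hvm : ∀ i, v i ≤ vmax)
    (ε : ℝ) (hε : 0 < ε) (hεm : ε < 1 / vmax)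
    (y : Fin N → ℤ) (t : ℝ)
    (q : ℕ) (hq : q + 1 < N) (x : Fin N → ℤ)
    (hx : x ⟨q + 1, hq⟩ = x ⟨q, Nat.lt_of_succ_lt hq⟩) :
    (v (q + 2) : ℂ) * Pc N v ε y x t =
      (v (q + 1) : ℂ) *
        Pc N v ε y (Function.update x ⟨q + 1, hq⟩ (x ⟨q, Nat.lt_of_succ_lt hq⟩ + 1)) t := by
  set i₀ : Fin N := ⟨q, Nat.lt_of_succ_lt hq⟩
  set i₁ : Fin N := ⟨q + 1, hq⟩
  have hvε : ∀ j, |v j| * ε < 1 := fun j => by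
    have hvmax : vmax * ε < 1 := (lt_div_iff₀' ((hv j).trans_le (hvm j))).1 hεm
    rw [abs_of_pos (hv j)]
    nlinarith [hvm j]
  have hdet := Matrix.det_eq_mul_det_updateCol_of_col_eq
    (Matrix.of fun m n : Fin N => F v ε ((m : ℕ) + 1) ((n : ℕ) + 1) (x n - y m) t)
    (i := i₀) (j := i₁) (Fin.ne_of_val_ne (Nat.lt_succ_self q).ne)
    (fun m => F v ε ((m : ℕ) + 1) (q + 2) (x i₁ - y m) t)
    (fun m => F v ε ((m : ℕ) + 1) (q + 2) (x i₁ + 1 - y m) t) (v (q + 1))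
    (fun m => by
      rw [Matrix.of_apply, hx, ← sub_add_eq_add_sub]
      exact F.eq_sub_mul_succ _ _ _ _ hε hvε (Nat.le_add_left 1 q))
    (fun m => rfl)
  have hupd := Matrix.of_update_eq_updateCol
    (fun (m n : Fin N) (a : ℤ) => F v ε ((m : ℕ) + 1) ((n : ℕ) + 1) (a - y m) t)
    x i₁ (x i₁ + 1)
  have hpref := prod_mul_zpow_update_add_one
    (fun i : Fin N => Complex.exp (-(t * v ((i : ℕ) + 1) : ℝ)))
    (fun i : Fin N => (v ((i : ℕ) + 1) : ℂ)) x y i₁ (Complex.ofReal_ne_zero.2 (hv _).ne')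
  rw [← hx]
  simp only [Pc] at hupd hpref ⊢
  rw [hupd, hpref, hdet]
  ring

theorem determinant_boundary_condition
    (N : ℕ) (v : ℕ → ℝ) (vmax : ℝ) (hv : ∀ i, 0 < v i) (hvm : ∀ i, v i ≤ vmax)
    (ε : ℝ) (hε : 0 < ε) (hεm : ε < 1 / vmax)
    (y : Fin N → ℤ) (t : ℝ) (ht : 0 ≤ t)
    (q : ℕ) (hq : q + 1 < N) (x : Fin N → ℤ)
    (hx : x ⟨q + 1, hq⟩ = x ⟨q, Nat.lt_of_succ_lt hq⟩) :
    (v (q + 2) : ℂ) * Pc N v ε y x t =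
      (v (q + 1) : ℂ) *
        Pc N v ε y (Function.update x ⟨q + 1, hq⟩ (x ⟨q, Nat.lt_of_succ_lt hq⟩ + 1)) t :=
  determinant_boundary_condition_general N v vmax hv hvm ε hε hεm y t q hq x hx
end

section
/- Monotone tail summation (Corollary proof step, $N=2$ case): let $P(x_1,x_2)=e^{-t(v_1+v_2)}v_1^{x_1-y_1}v_2^{x_2-y_2}\det\begin{pmatrix}F_{1,1}(x_1-y_1,t)&F_{1,2}(x_2-y_1,t)\\F_{2,1}(x_1-y_2,t)&F_{2,2}(x_2-y_2,t)\end{pmatrix}$. Then for $z_1<z_2$, $\sum_{x_2=z_2}^{\infty}\sum_{x_1=z_1}^{x_2-1}P(x_1,x_2)= e^{-t(v_1+v_2)}v_1^{z_1-y_1}v_2^{z_2-y_2}\det\begin{pmatrix}F_{1,2}(z_1-y_1,t)&F_{1,3}(z_2-y_1,t)\\F_{2,2}(z_1-y_2,t)&F_{2,3}(z_2-y_2,t)\end{pmatrix}$, the double series converging absolutely. -/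
open Finset

/-- The two-particle conditional probability determinant. -/
noncomputable def P2 (v : ℕ → ℝ) (ε : ℝ) (y₁ y₂ x₁ x₂ : ℤ) (t : ℝ) : ℂ :=
  Complex.exp (-(t * (v 1 + v 2) : ℝ)) * (v 1 : ℂ) ^ (x₁ - y₁) * (v 2 : ℂ) ^ (x₂ - y₂) *
    Matrix.det !![F v ε 1 1 (x₁ - y₁) t, F v ε 1 2 (x₂ - y₁) t;
                  F v ε 2 1 (x₁ - y₂) t, F v ε 2 2 (x₂ - y₂) t]

/-!
Lowering `l` by one multiplies the integrand of `F_{k,l}` by `1 - v_l z`, so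
`F_{k,l}(x) = F_{k,l+1}(x) - v_l F_{k,l+1}(x+1)` and both columns of the determinant are
telescoping differences in `x`. Summing the first column over `z₁ ≤ x₁ < x₂` leaves its value at
`z₁` minus its value at `x₂`, and the latter is proportional to the second column at `x₂`, so it
drops out of the determinant. Summing the second column over `x₂ ≥ z₂` then telescopes to its
value at `z₂`. Convergence comes from `|F_{k,l}(x)| = O(ε^x)` on the circle of radius `ε`,
together with `v_i ε < 1`.
-/

open Filter Topology

section Series

variable {G : Type*} [AddCommGroup G]

theorem Int.sum_Ico_sub' (f : ℤ → G) {a b : ℤ} (hab : a ≤ b) :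
    ∑ x ∈ Ico a b, (f x - f (x + 1)) = f a - f b := by
  induction b, hab using Int.leInduction with
  | base => simp
  | succ b hab ih =>
    rw [← insert_Ico_right_eq_Ico_add_one hab, sum_insert right_notMem_Ico, ih]
    abel

variable [TopologicalSpace G] [IsTopologicalAddGroup G] [T2Space G]

theorem hasSum_sub_succ_of_tendsto {f : ℕ → G}
    (hs : Summable fun n => f n - f (n + 1)) (hf : Tendsto f atTop (𝓝 0)) :
    HasSum (fun n => f n - f (n + 1)) (f 0) := by
  have hpartial : Tendsto (fun N => ∑ n ∈ range N, (f n - f (n + 1))) atTop (𝓝 (f 0)) := by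
    simp only [sum_range_sub']
    simpa using (tendsto_const_nhds (x := f 0)).sub hf
  rw [← tendsto_nhds_unique hs.hasSum.tendsto_sum_nat hpartial]
  exact hs.hasSum

theorem hasSum_triangle_of_sum_Ico {f : ℤ × ℤ → G} {g : ℤ → G} {s : G} {z₁ z₂ : ℤ}
    (hf : Summable fun p : {p : ℤ × ℤ // z₁ ≤ p.1 ∧ z₂ ≤ p.2 ∧ p.1 < p.2} => f p)
    (hfiber : ∀ x₂, z₂ ≤ x₂ → ∑ x₁ ∈ Ico z₁ x₂, f (x₁, x₂) = g x₂)
    (hg : HasSum (fun n : ℕ => g (z₂ + n)) s) :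
    HasSum (fun p : {p : ℤ × ℤ // z₁ ≤ p.1 ∧ z₂ ≤ p.2 ∧ p.1 < p.2} => f p) s := by
  set S : Set (ℤ × ℤ) := {p | z₁ ≤ p.1 ∧ z₂ ≤ p.2 ∧ p.1 < p.2}
  have hS : HasSum (S.indicator f ∘ Prod.swap) (∑' p : S, f p) :=
    (Equiv.prodComm ℤ ℤ).hasSum_iff.mpr (hasSum_subtype_iff_indicator.mp hf.hasSum)
  have hfib (x₂ : ℤ) : HasSum (fun x₁ => S.indicator f (x₁, x₂))
      (if z₂ ≤ x₂ then g x₂ else 0) := by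
    have hsupp : ∀ x₁ ∉ Ico z₁ x₂, S.indicator f (x₁, x₂) = 0 := fun x₁ hx₁ =>
      Set.indicator_of_notMem (fun h => hx₁ (mem_Ico.mpr ⟨h.1, h.2.2⟩)) _
    suffices ∑ x₁ ∈ Ico z₁ x₂, S.indicator f (x₁, x₂) = if z₂ ≤ x₂ then g x₂ else 0 by
      rw [← this]
      exact hasSum_sum_of_ne_finset_zero hsupp
    split_ifs with hx₂
    · rw [← hfiber x₂ hx₂]
      refine sum_congr rfl fun x₁ hx₁ => Set.indicator_of_mem ?_ _
      exact ⟨(mem_Ico.mp hx₁).1, hx₂, (mem_Ico.mp hx₁).2⟩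
    · exact sum_eq_zero fun x₁ _ => Set.indicator_of_notMem (fun h => hx₂ h.2.1) _
  have hg' : HasSum (fun x₂ => if z₂ ≤ x₂ then g x₂ else 0) s := by
    rw [← ((add_right_injective z₂).comp Nat.cast_injective).hasSum_iff]
    · convert hg using 1
      ext n
      simp
    · rintro x₂ hx₂
      rw [if_neg]
      exact fun h => hx₂ ⟨(x₂ - z₂).toNat, by simp only [Function.comp_apply]; omega⟩
  rw [hg'.unique (hS.prod_fiberwise hfib)]
  exact hf.hasSum

end Series

theorem summable_norm_shift_of_norm_le_zpow {E : Type*} [SeminormedAddCommGroup E] {f : ℤ → E}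
    {C r : ℝ} (hr₀ : 0 < r) (hr₁ : r < 1) (hf : ∀ x, ‖f x‖ ≤ C * r ^ x) (z : ℤ) :
    Summable fun n : ℕ => ‖f (z + n)‖ := by
  refine Summable.of_nonneg_of_le (fun n => norm_nonneg _) (fun n => ?_)
    ((summable_geometric_of_lt_one hr₀.le hr₁).mul_left (C * r ^ z))
  calc ‖f (z + n)‖ ≤ C * r ^ (z + n) := hf _
    _ = C * r ^ z * r ^ n := by rw [zpow_add₀ hr₀.ne', zpow_natCast, mul_assoc]

section Bilinear

variable {𝕜 E F G : Type*} [NontriviallyNormedField 𝕜]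
  [NormedAddCommGroup E] [NormedSpace 𝕜 E]
  [NormedAddCommGroup F] [NormedSpace 𝕜 F]
  [NormedAddCommGroup G] [NormedSpace 𝕜 G] [CompleteSpace G]

theorem summable_triangle_bilinear (B : E →L[𝕜] F →L[𝕜] G) {u : ℤ → E} {w : ℤ → F}
    {z₁ z₂ : ℤ} (hu : Summable fun n : ℕ => ‖u (z₁ + n)‖)
    (hw : Summable fun n : ℕ => ‖w (z₂ + n)‖) :
    Summable fun p : {p : ℤ × ℤ // z₁ ≤ p.1 ∧ z₂ ≤ p.2 ∧ p.1 < p.2} => B (u p.1.1) (w p.1.2) := by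
  let ι : {p : ℤ × ℤ // z₁ ≤ p.1 ∧ z₂ ≤ p.2 ∧ p.1 < p.2} → ℕ × ℕ :=
    fun p => ((p.1.1 - z₁).toNat, (p.1.2 - z₂).toNat)
  have hι : Function.Injective ι := by
    rintro ⟨⟨a₁, a₂⟩, ha⟩ ⟨⟨b₁, b₂⟩, hb⟩ h
    simp only [ι, Prod.mk.injEq] at h ha hb
    ext <;> dsimp only <;> omega
  have hmaj := ((hu.mul_of_nonneg hw (fun _ => norm_nonneg _) fun _ => norm_nonneg _).comp_injective
    hι).mul_left ‖B‖
  refine hmaj.of_norm_bounded fun p => ?_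
  have h₁ : z₁ + ((p.1.1 - z₁).toNat : ℤ) = p.1.1 := by omega
  have h₂ : z₂ + ((p.1.2 - z₂).toNat : ℤ) = p.1.2 := by omega
  show ‖B (u p.1.1) (w p.1.2)‖ ≤
    ‖B‖ * (‖u (z₁ + ((p.1.1 - z₁).toNat : ℤ))‖ * ‖w (z₂ + ((p.1.2 - z₂).toNat : ℤ))‖)
  rw [h₁, h₂, ← mul_assoc]
  exact B.le_opNorm₂ _ _

theorem hasSum_triangle_bilinear_of_telescoping [CompleteSpace F] (B : E →L[𝕜] F →L[𝕜] G)
    {u a : ℤ → E} {w b : ℤ → F} {z₁ z₂ : ℤ} (hz : z₁ ≤ z₂)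
    (hu : ∀ x, u x = a x - a (x + 1)) (hw : ∀ x, w x = b x - b (x + 1))
    (hab : ∀ x, B (a x) (w x) = 0)
    (hu_sum : Summable fun n : ℕ => ‖u (z₁ + n)‖) (hw_sum : Summable fun n : ℕ => ‖w (z₂ + n)‖)
    (hb : Tendsto (fun n : ℕ => b (z₂ + n)) atTop (𝓝 0)) :
    HasSum (fun p : {p : ℤ × ℤ // z₁ ≤ p.1 ∧ z₂ ≤ p.2 ∧ p.1 < p.2} => B (u p.1.1) (w p.1.2))
      (B (a z₁) (b z₂)) := by
  have hw_tail : HasSum (fun n : ℕ => w (z₂ + n)) (b z₂) := by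
    have hshift (n : ℕ) : w (z₂ + n) = b (z₂ + n) - b (z₂ + (n + 1 : ℕ)) := by
      rw [hw, Nat.cast_succ, add_assoc]
    simp only [hshift] at hw_sum ⊢
    simpa using hasSum_sub_succ_of_tendsto (f := fun n : ℕ => b (z₂ + n)) hw_sum.of_norm hb
  refine hasSum_triangle_of_sum_Ico (f := fun p => B (u p.1) (w p.2))
    (g := fun x₂ => B (a z₁) (w x₂))
    (summable_triangle_bilinear B hu_sum hw_sum) (fun x₂ hx₂ => ?_)
    ((B (a z₁)).hasSum hw_tail)
  simp only [hu, map_sub, sub_apply]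
  rw [Int.sum_Ico_sub' (fun x => B (a x) (w x₂)) (hz.trans hx₂), hab, sub_zero]

end Bilinear

theorem one_sub_ofReal_mul_ne_zero {a ε : ℝ} {z : ℂ} (h : |a| * ε < 1)
    (hz : z ∈ Metric.sphere (0 : ℂ) ε) : 1 - (a : ℂ) * z ≠ 0 := by
  rw [mem_sphere_zero_iff_norm] at hz
  intro h0
  have : ‖(a : ℂ) * z‖ = 1 := by rw [← sub_eq_zero.mp h0, norm_one]
  rw [norm_mul, Complex.norm_real, Real.norm_eq_abs, hz] at this
  exact h.ne this

noncomputable section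

def integrandF (v : ℕ → ℝ) (t : ℝ) (k l : ℕ) (x : ℤ) (z : ℂ) : ℂ :=
  Complex.exp ((t : ℂ) / z) * z ^ (x - 1) *
    (∏ i ∈ range (l - 1), (1 - (v (i + 1) : ℂ) * z)⁻¹) *
    ∏ i ∈ range (k - 1), (1 - (v (i + 1) : ℂ) * z)

theorem F_eq_circleIntegral (v : ℕ → ℝ) (ε : ℝ) (k l : ℕ) (x : ℤ) (t : ℝ) :
    F v ε k l x t = (2 * Real.pi * Complex.I)⁻¹ * ∮ z in C(0, ε), integrandF v t k l x z :=
  rfl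

theorem integrandF_eq_zpow_mul (v : ℕ → ℝ) (t : ℝ) (k l : ℕ) (x : ℤ) {z : ℂ} (hz : z ≠ 0) :
    integrandF v t k l x z = z ^ x * integrandF v t k l 0 z := by
  simp only [integrandF, zero_sub, zpow_sub_one₀ hz, zpow_neg_one]
  ring

theorem integrandF_eq_sub (v : ℕ → ℝ) (t : ℝ) (k : ℕ) {l : ℕ} (hl : 1 ≤ l) (x : ℤ) {z : ℂ}
    (hz : z ≠ 0) (hvz : 1 - (v l : ℂ) * z ≠ 0) :
    integrandF v t k l x z =
      integrandF v t k (l + 1) x z - v l * integrandF v t k (l + 1) (x + 1) z := by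
  obtain ⟨m, rfl⟩ := Nat.exists_eq_add_of_le' hl
  simp only [integrandF, Nat.add_sub_cancel, prod_range_succ]
  rw [show x + 1 - 1 = x - 1 + 1 by ring, zpow_add_one₀ hz]
  linear_combination (-(Complex.exp (t / z) * z ^ (x - 1) *
    (∏ i ∈ range m, (1 - (v (i + 1) : ℂ) * z)⁻¹) *
    ∏ i ∈ range (k - 1), (1 - (v (i + 1) : ℂ) * z))) * inv_mul_cancel₀ hvz

section FIntegral

variable {v : ℕ → ℝ} {ε : ℝ} (t : ℝ) (hε : 0 < ε) (hvε : ∀ i, |v i| * ε < 1)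
include hε hvε

theorem continuousOn_integrandF (k l : ℕ) (x : ℤ) :
    ContinuousOn (integrandF v t k l x) (Metric.sphere 0 ε) := by
  have hz : ∀ z ∈ Metric.sphere (0 : ℂ) ε, z ≠ 0 := fun z hz => Metric.ne_of_mem_sphere hz hε.ne'
  refine ((ContinuousOn.mul ?_ ?_).mul ?_).mul ?_
  · exact (continuousOn_const.div continuousOn_id hz).cexp
  · exact continuousOn_id.zpow₀ _ fun z h => Or.inl (hz z h)
  · exact continuousOn_finsetProd _ fun i _ =>
      (continuousOn_const.sub (continuousOn_const.mul continuousOn_id)).inv₀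
        fun z h => one_sub_ofReal_mul_ne_zero (hvε _) h
  · exact continuousOn_finsetProd _ fun i _ => by fun_prop

theorem exists_norm_F_le (k l : ℕ) : ∃ C, ∀ x, ‖F v ε k l x t‖ ≤ C * ε ^ x := by
  obtain ⟨C, hC⟩ := (isCompact_sphere (0 : ℂ) ε).exists_bound_of_continuousOn
    (continuousOn_integrandF t hε hvε k l 0)
  refine ⟨ε * C, fun x => ?_⟩
  have hbound : ∀ z ∈ Metric.sphere (0 : ℂ) ε, ‖integrandF v t k l x z‖ ≤ ε ^ x * C := by
    intro z hz
    rw [integrandF_eq_zpow_mul v t k l x (Metric.ne_of_mem_sphere hz hε.ne'), norm_mul, norm_zpow,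
      mem_sphere_zero_iff_norm.mp hz]
    exact mul_le_mul_of_nonneg_left (hC z hz) (zpow_nonneg hε.le x)
  calc ‖F v ε k l x t‖ ≤ ε * (ε ^ x * C) :=
        circleIntegral.norm_two_pi_i_inv_smul_integral_le_of_norm_le_const hε.le hbound
    _ = ε * C * ε ^ x := by ring

theorem F_eq_sub (k : ℕ) {l : ℕ} (hl : 1 ≤ l) (x : ℤ) :
    F v ε k l x t = F v ε k (l + 1) x t - v l * F v ε k (l + 1) (x + 1) t := by
  have hint (x : ℤ) := (continuousOn_integrandF t hε hvε k (l + 1) x).circleIntegrable hε.le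
  have hint' : CircleIntegrable (fun z => (v l : ℂ) * integrandF v t k (l + 1) (x + 1) z) 0 ε :=
    (hint (x + 1)).const_smul
  simp only [F_eq_circleIntegral]
  rw [mul_left_comm, ← mul_sub]
  congr 1
  rw [← circleIntegral.integral_const_mul, ← circleIntegral.integral_sub (hint x) hint']
  exact circleIntegral.integral_congr hε.le fun z hz =>
    integrandF_eq_sub v t k hl x (Metric.ne_of_mem_sphere hz hε.ne')
      (one_sub_ofReal_mul_ne_zero (hvε l) hz)

end FIntegral

def det₂ : (Fin 2 → ℂ) →L[ℂ] (Fin 2 → ℂ) →L[ℂ] ℂ :=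
  (ContinuousLinearMap.mul ℂ ℂ).bilinearComp (.proj 0) (.proj 1) -
    (ContinuousLinearMap.mul ℂ ℂ).bilinearComp (.proj 1) (.proj 0)

@[simp]
theorem det₂_apply (p q : Fin 2 → ℂ) : det₂ p q = p 0 * q 1 - p 1 * q 0 :=
  rfl

theorem det₂_smul_smul_self (a b : ℂ) (p : Fin 2 → ℂ) : det₂ (a • p) (b • p) = 0 := by
  simp only [det₂_apply, Pi.smul_apply, smul_eq_mul]
  ring

/-- The columns of the determinant in `P2` (`l = 1, 2`) and in the tail sum (`l = 2, 3`). -/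
def Fcol (v : ℕ → ℝ) (ε t : ℝ) (y₁ y₂ : ℤ) (l : ℕ) (x : ℤ) : Fin 2 → ℂ :=
  ![F v ε 1 l (x - y₁) t, F v ε 2 l (x - y₂) t]

theorem P2_eq_det₂ (v : ℕ → ℝ) (ε : ℝ) (y₁ y₂ x₁ x₂ : ℤ) (t : ℝ) :
    P2 v ε y₁ y₂ x₁ x₂ t = Complex.exp (-(t * (v 1 + v 2) : ℝ)) *
      det₂ ((v 1 : ℂ) ^ (x₁ - y₁) • Fcol v ε t y₁ y₂ 1 x₁)
        ((v 2 : ℂ) ^ (x₂ - y₂) • Fcol v ε t y₁ y₂ 2 x₂) := by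
  simp only [P2, Fcol, Matrix.det_fin_two_of, Matrix.smul_cons, smul_eq_mul, Matrix.smul_empty,
    det₂_apply, Matrix.cons_val_zero, Matrix.cons_val_one]
  ring

section FColumn

variable {v : ℕ → ℝ} {ε : ℝ} (t : ℝ) (hε : 0 < ε) (hvε : ∀ i, |v i| * ε < 1) (y₁ y₂ : ℤ)
include hε hvε

theorem zpow_smul_Fcol_eq_sub {l : ℕ} (hvl : v l ≠ 0) (hl : 1 ≤ l) (c x : ℤ) :
    (v l : ℂ) ^ (x - c) • Fcol v ε t y₁ y₂ l x =
      (v l : ℂ) ^ (x - c) • Fcol v ε t y₁ y₂ (l + 1) x -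
        (v l : ℂ) ^ (x + 1 - c) • Fcol v ε t y₁ y₂ (l + 1) (x + 1) := by
  have hpow : (v l : ℂ) ^ (x + 1 - c) = (v l : ℂ) ^ (x - c) * v l := by
    rw [show x + 1 - c = x - c + 1 by ring, zpow_add_one₀ (Complex.ofReal_ne_zero.mpr hvl)]
  ext j
  fin_cases j <;>
  · simp only [Fcol, Pi.sub_apply, Pi.smul_apply, smul_eq_mul, hpow]
    simp only [Fin.zero_eta, Fin.mk_one, Matrix.cons_val_zero, Matrix.cons_val_one]
    rw [F_eq_sub t hε hvε _ hl, add_sub_right_comm]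
    ring

theorem exists_norm_Fcol_le (l : ℕ) : ∃ C, ∀ x, ‖Fcol v ε t y₁ y₂ l x‖ ≤ C * ε ^ x := by
  obtain ⟨C₁, hC₁⟩ := exists_norm_F_le t hε hvε 1 l
  obtain ⟨C₂, hC₂⟩ := exists_norm_F_le t hε hvε 2 l
  have hshift (C : ℝ) (x y : ℤ) : C * ε ^ (x - y) = C * ε ^ (-y) * ε ^ x := by
    rw [sub_eq_add_neg, zpow_add₀ hε.ne']
    ring
  refine ⟨max (C₁ * ε ^ (-y₁)) (C₂ * ε ^ (-y₂)), fun x => ?_⟩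
  have h₁ : ‖F v ε 1 l (x - y₁) t‖ ≤ max (C₁ * ε ^ (-y₁)) (C₂ * ε ^ (-y₂)) * ε ^ x :=
    (hC₁ _).trans (by rw [hshift]; gcongr; exact le_max_left _ _)
  have h₂ : ‖F v ε 2 l (x - y₂) t‖ ≤ max (C₁ * ε ^ (-y₁)) (C₂ * ε ^ (-y₂)) * ε ^ x :=
    (hC₂ _).trans (by rw [hshift]; gcongr; exact le_max_right _ _)
  exact (pi_norm_le_iff_of_nonneg ((norm_nonneg _).trans h₁)).mpr
    (Fin.forall_fin_two.mpr ⟨h₁, h₂⟩)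

theorem summable_norm_zpow_smul_Fcol {i : ℕ} (hvi : v i ≠ 0) (l : ℕ) (c z : ℤ) :
    Summable fun n : ℕ => ‖(v i : ℂ) ^ (z + n - c) • Fcol v ε t y₁ y₂ l (z + n)‖ := by
  obtain ⟨C, hC⟩ := exists_norm_Fcol_le t hε hvε y₁ y₂ l
  have hvi' : 0 < |v i| := abs_pos.mpr hvi
  refine summable_norm_shift_of_norm_le_zpow
    (f := fun x => (v i : ℂ) ^ (x - c) • Fcol v ε t y₁ y₂ l x) (C := |v i| ^ (-c) * C)
    (by positivity) (hvε i) (fun x => ?_) z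
  calc ‖(v i : ℂ) ^ (x - c) • Fcol v ε t y₁ y₂ l x‖ ≤ |v i| ^ (x - c) * (C * ε ^ x) := by
        rw [norm_smul, norm_zpow, Complex.norm_real, Real.norm_eq_abs]
        gcongr
        exact hC x
    _ = |v i| ^ (-c) * C * (|v i| * ε) ^ x := by
        rw [mul_zpow, sub_eq_add_neg, zpow_add₀ hvi'.ne']
        ring

end FColumn

end

theorem tail_summation_two_particles_general
    (v : ℕ → ℝ) (vmax : ℝ) (hv : ∀ i, 0 < v i) (hvm : ∀ i, v i ≤ vmax)
    (ε : ℝ) (hε : 0 < ε) (hεm : ε < 1 / vmax)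
    (y₁ y₂ : ℤ) (z₁ z₂ : ℤ) (hz : z₁ < z₂) (t : ℝ) :
    HasSum
      (fun p : {p : ℤ × ℤ // z₁ ≤ p.1 ∧ z₂ ≤ p.2 ∧ p.1 < p.2} =>
        P2 v ε y₁ y₂ p.1.1 p.1.2 t)
      (Complex.exp (-(t * (v 1 + v 2) : ℝ)) * (v 1 : ℂ) ^ (z₁ - y₁) * (v 2 : ℂ) ^ (z₂ - y₂) *
        Matrix.det !![F v ε 1 2 (z₁ - y₁) t, F v ε 1 3 (z₂ - y₁) t;
                      F v ε 2 2 (z₁ - y₂) t, F v ε 2 3 (z₂ - y₂) t]) := by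
  have hvmax : 0 < vmax := (hv 1).trans_le (hvm 1)
  have hvε (i : ℕ) : |v i| * ε < 1 := by
    rw [abs_of_pos (hv i)]
    calc v i * ε ≤ vmax * ε := by gcongr; exact hvm i
      _ < 1 := by rwa [lt_div_iff₀ hvmax, mul_comm] at hεm
  have hv₀ (i : ℕ) : v i ≠ 0 := (hv i).ne'
  have key := hasSum_triangle_bilinear_of_telescoping det₂ hz.le
    (zpow_smul_Fcol_eq_sub t hε hvε y₁ y₂ (hv₀ 1) le_rfl y₁)
    (zpow_smul_Fcol_eq_sub t hε hvε y₁ y₂ (hv₀ 2) one_le_two y₂)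
    (fun x => det₂_smul_smul_self _ _ _)
    (summable_norm_zpow_smul_Fcol t hε hvε y₁ y₂ (hv₀ 1) 1 y₁ z₁)
    (summable_norm_zpow_smul_Fcol t hε hvε y₁ y₂ (hv₀ 2) 2 y₂ z₂)
    (summable_norm_zpow_smul_Fcol t hε hvε y₁ y₂ (hv₀ 2) 3 y₂ z₂).of_norm.tendsto_atTop_zero
  have htarget : (v 1 : ℂ) ^ (z₁ - y₁) * ((v 2 : ℂ) ^ (z₂ - y₂) *
      Matrix.det !![F v ε 1 2 (z₁ - y₁) t, F v ε 1 3 (z₂ - y₁) t;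
        F v ε 2 2 (z₁ - y₂) t, F v ε 2 3 (z₂ - y₂) t]) =
      det₂ ((v 1 : ℂ) ^ (z₁ - y₁) • Fcol v ε t y₁ y₂ 2 z₁)
        ((v 2 : ℂ) ^ (z₂ - y₂) • Fcol v ε t y₁ y₂ 3 z₂) := by
    simp only [Fcol, Matrix.det_fin_two_of, Matrix.smul_cons, smul_eq_mul, Matrix.smul_empty,
      det₂_apply, Matrix.cons_val_zero, Matrix.cons_val_one]
    ring
  simp only [P2_eq_det₂, mul_assoc, htarget]
  exact key.mul_left _

theorem tail_summation_two_particles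
    (v : ℕ → ℝ) (vmax : ℝ) (hv : ∀ i, 0 < v i) (hvm : ∀ i, v i ≤ vmax)
    (ε : ℝ) (hε : 0 < ε) (hεm : ε < 1 / vmax)
    (y₁ y₂ : ℤ) (hy : y₁ < y₂) (z₁ z₂ : ℤ) (hz : z₁ < z₂) (t : ℝ) (ht : 0 ≤ t) :
    HasSum
      (fun p : {p : ℤ × ℤ // z₁ ≤ p.1 ∧ z₂ ≤ p.2 ∧ p.1 < p.2} =>
        P2 v ε y₁ y₂ p.1.1 p.1.2 t)
      (Complex.exp (-(t * (v 1 + v 2) : ℝ)) * (v 1 : ℂ) ^ (z₁ - y₁) * (v 2 : ℂ) ^ (z₂ - y₂) *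
        Matrix.det !![F v ε 1 2 (z₁ - y₁) t, F v ε 1 3 (z₂ - y₁) t;
                      F v ε 2 2 (z₁ - y₂) t, F v ε 2 3 (z₂ - y₂) t]) :=
  tail_summation_two_particles_general v vmax hv hvm ε hε hεm y₁ y₂ z₁ z₂ hz t
end
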